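/- arXiv:2302.08283 — 8 statements merged into one kernel-verified Lean document; each statement's English description precedes it below -/
import Mathlib

section
/- Let D be a digraph and let X be a subset of V(D) such that every vertex of X has both an in-neighbor and an out-neighbor in D−X. If D−X has an arc-disjoint pair consisting of an out-branching rooted at u and an in-branching rooted at v (with u,v ∈ V(D)\X), then D also has such an arc-disjoint pair of an out-branching rooted at u and an in-branching rooted at v. -/
/-- Two arc sets (relations) are arc-disjoint. -/
def ArcDisjoint {V : Type*} (B₁ B₂ : V → V → Prop) : Prop := ∀ x y, ¬ (B₁ x y ∧ B₂ x y)

/-- `B` is (the arc set of) an out-branching of the digraph with arc relation `A`,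
rooted at `u`: a spanning oriented tree in which every vertex except `u` has
in-degree one and every vertex is reachable from `u`. -/
def IsOutBranching {V : Type*} (A B : V → V → Prop) (u : V) : Prop :=
  (∀ x y, B x y → A x y) ∧ (∀ w, w ≠ u → ∃! x, B x w) ∧ (∀ x, ¬ B x u) ∧
    (∀ w, Relation.ReflTransGen B u w)

/-- `B` is an in-branching of `A` rooted at `v`. -/
def IsInBranching {V : Type*} (A B : V → V → Prop) (v : V) : Prop :=
  (∀ x y, B x y → A x y) ∧ (∀ w, w ≠ v → ∃! y, B w y) ∧ (∀ y, ¬ B v y) ∧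
    (∀ w, Relation.ReflTransGen B w v)

/-- A good `(u,v)`-pair: an arc-disjoint pair of an out-branching rooted at `u`
and an in-branching rooted at `v`. -/
def GoodPair {V : Type*} (A : V → V → Prop) (u v : V) : Prop :=
  ∃ B₁ B₂, IsOutBranching A B₁ u ∧ IsInBranching A B₂ v ∧ ArcDisjoint B₁ B₂

/-- A digraph is strong if every vertex can reach every other vertex. -/
def IsStrong {V : Type*} (A : V → V → Prop) : Prop := ∀ x y, Relation.ReflTransGen A x y

/-- `k`-arc-strong: removing any set of fewer than `k` arcs leaves a strong digraph. -/
def IsKArcStrong {V : Type*} (A : V → V → Prop) (k : ℕ) : Prop :=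
  ∀ F : Set (V × V), F.Finite → F.ncard < k →
    IsStrong fun x y => A x y ∧ (x, y) ∉ F

/-- The composition `D[H₁,…,Hₙ]` of a digraph `D` on index type `ι` with digraphs
`H i` on types `β i`: vertices are `Σ i, β i`; arcs are the internal arcs of each
`H i` together with all arcs from `β i` to `β j` whenever `D i j` and `i ≠ j`. -/
def Comp {ι : Type*} {β : ι → Type*} (D : ι → ι → Prop) (H : ∀ i, β i → β i → Prop) :
    (Σ i, β i) → (Σ i, β i) → Prop :=
  fun x y => (∃ h : y.1 = x.1, H x.1 x.2 (h ▸ y.2)) ∨ (x.1 ≠ y.1 ∧ D x.1 y.1)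


/-!
Keep the two branchings of `D − X` and hang every `x ∈ X` on them as a leaf: in the
out-branching by an arc from an in-neighbour `p x ∉ X`, in the in-branching by an arc to
an out-neighbour `q x ∉ X`. A new arc of the out-branching ends in `X` while one of the
in-branching starts in `X` and ends outside it, so no arc is used twice.
-/

open Function Relation

theorem isInBranching_iff_isOutBranching_swap {V : Type*} (A B : V → V → Prop) (v : V) :
    IsInBranching A B v ↔ IsOutBranching (swap A) (swap B) v := by
  simp only [IsInBranching, IsOutBranching, swap, ← reflTransGen_swap (r := B)]
  rw [forall_comm]

section AttachLeaves

variable {V : Type*} {X : Set V}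

def attachLeaves (X : Set V) (B : {w // w ∉ X} → {w // w ∉ X} → Prop) (p : V → V) :
    V → V → Prop :=
  fun x y => Relation.Map B Subtype.val Subtype.val x y ∨ (y ∈ X ∧ x = p y)

theorem reflTransGen_attachLeaves {B : {w // w ∉ X} → {w // w ∉ X} → Prop} {a b : {w // w ∉ X}}
    (p : V → V) (hab : ReflTransGen B a b) : ReflTransGen (attachLeaves X B p) a b :=
  ReflTransGen.lift Subtype.val (fun c d hcd => Or.inl ⟨c, d, hcd, rfl, rfl⟩ :
    B ≤ (attachLeaves X B p on Subtype.val)) a b hab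

theorem IsOutBranching.attachLeaves {A : V → V → Prop} {B : {w // w ∉ X} → {w // w ∉ X} → Prop}
    {u : {w // w ∉ X}} {p : V → V} (hB : IsOutBranching (fun a b => A a.1 b.1) B u)
    (hp : ∀ x ∈ X, p x ∉ X ∧ A (p x) x) : IsOutBranching A (attachLeaves X B p) u := by
  obtain ⟨hBA, hBparent, hBroot, hBreach⟩ := hB
  refine ⟨?_, fun w hw => ?_, ?_, fun w => ?_⟩
  · rintro x y (⟨c, d, hcd, rfl, rfl⟩ | ⟨hy, rfl⟩)
    · exact hBA c d hcd
    · exact (hp y hy).2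
  · by_cases hwX : w ∈ X
    · refine ⟨p w, Or.inr ⟨hwX, rfl⟩, ?_⟩
      rintro x (⟨c, d, -, -, rfl⟩ | ⟨-, rfl⟩)
      · exact absurd hwX d.2
      · rfl
    · obtain ⟨x, hx, hxuniq⟩ := hBparent ⟨w, hwX⟩ fun h => hw (congrArg Subtype.val h)
      refine ⟨x, Or.inl ⟨x, _, hx, rfl, rfl⟩, ?_⟩
      rintro y (⟨c, d, hcd, rfl, rfl⟩ | ⟨hw', -⟩)
      · exact congrArg Subtype.val (hxuniq c hcd)
      · exact absurd hw' hwX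
  · rintro x (⟨c, d, hcd, -, hd⟩ | ⟨hu, -⟩)
    · exact hBroot c (Subtype.ext hd ▸ hcd)
    · exact u.2 hu
  · by_cases hwX : w ∈ X
    · exact (reflTransGen_attachLeaves p (hBreach ⟨p w, (hp w hwX).1⟩)).tail
        (Or.inr ⟨hwX, rfl⟩)
    · exact reflTransGen_attachLeaves p (hBreach ⟨w, hwX⟩)

theorem ArcDisjoint.attachLeaves {B₁ B₂ : {w // w ∉ X} → {w // w ∉ X} → Prop} {p : V → V}
    (hB : ArcDisjoint B₁ B₂) (hp : ∀ x ∈ X, p x ∉ X) (q : V → V) :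
    ArcDisjoint (attachLeaves X B₁ p) (swap (attachLeaves X (swap B₂) q)) := by
  rintro x y ⟨⟨c, d, hcd, rfl, rfl⟩ | ⟨hy, rfl⟩, ⟨d', c', hdc', hd', hc'⟩ | ⟨hx, hy'⟩⟩
  · obtain rfl := Subtype.ext hc'
    obtain rfl := Subtype.ext hd'
    exact hB _ _ ⟨hcd, hdc'⟩
  · exact c.2 hx
  · exact d'.2 (hd' ▸ hy)
  · exact hp y hy hx

end AttachLeaves

/-- If every vertex of `X` has both an in-neighbor and an out-neighbor outside `X`,
and `D − X` has a good `(u,v)`-pair, then so does `D`. -/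
theorem stmt_0 {V : Type*} (A : V → V → Prop) (X : Set V) (u v : V)
    (hu : u ∉ X) (hv : v ∉ X)
    (hX : ∀ x ∈ X, (∃ a, a ∉ X ∧ A a x) ∧ ∃ b, b ∉ X ∧ A x b)
    (h : GoodPair (fun a b : {w : V // w ∉ X} => A a.1 b.1) ⟨u, hu⟩ ⟨v, hv⟩) :
    GoodPair A u v := by
  obtain ⟨B₁, B₂, hB₁, hB₂, hdisj⟩ := h
  choose! p hpX hpA using fun x hx => (hX x hx).1
  choose! q hqX hqA using fun x hx => (hX x hx).2
  refine ⟨attachLeaves X B₁ p, swap (attachLeaves X (swap B₂) q),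
    hB₁.attachLeaves fun x hx => ⟨hpX x hx, hpA x hx⟩, ?_, hdisj.attachLeaves hpX q⟩
  rw [isInBranching_iff_isOutBranching_swap] at hB₂ ⊢
  exact hB₂.attachLeaves (A := swap A) fun x hx => ⟨hqX x hx, hqA x hx⟩
end

section
/- Let D be a digraph of order n ≥ 2 and let H_1,…,H_n be pairwise vertex-disjoint digraphs, and let Q = D[H_1,…,H_n] be the composition. If Q is k-arc-strong and H_i is an independent set (a digraph with no arcs) with |V(H_i)| ≥ k+1, then the digraph Q′ obtained from Q by deleting one vertex of H_i is also k-arc-strong. -/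
section DeleteVertex

variable {V : Type*} {A : V → V → Prop}

theorem exists_mem_forall_ne_of_ncard_lt {S : Set V} (hS : ∀ a ∈ S, ∀ b ∈ S, ¬ A a b)
    {F : Set (V × V)} (hF : F.Finite) (hFA : ∀ p ∈ F, A p.1 p.2) (hlt : F.ncard < S.ncard) :
    ∃ s ∈ S, ∀ p ∈ F, p.1 ≠ s ∧ p.2 ≠ s := by
  classical
  -- An arc of `F` has at most one end in `S`; charge it to that end.
  let e : V × V → V := fun p => if p.1 ∈ S then p.1 else p.2
  obtain ⟨s, hsS, hse⟩ := Set.exists_mem_notMem_of_ncard_lt_ncard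
    ((Set.ncard_image_le hF).trans_lt hlt) (hF.image e)
  refine ⟨s, hsS, fun p hp => ⟨?_, ?_⟩⟩
  · rintro rfl
    exact hse ⟨p, hp, if_pos hsS⟩
  · rintro rfl
    by_cases h1 : p.1 ∈ S
    · exact hS _ h1 _ hsS (hFA p hp)
    · exact hse ⟨p, hp, if_neg h1⟩

variable [DecidableEq V] {w₀ s : V} (hs : s ≠ w₀)

def replaceVertex (z : V) : {z : V // z ≠ w₀} :=
  if h : z = w₀ then ⟨s, hs⟩ else ⟨z, h⟩

theorem replaceVertex_self : replaceVertex hs w₀ = ⟨s, hs⟩ := dif_pos rfl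

theorem replaceVertex_of_ne {z : V} (hz : z ≠ w₀) : replaceVertex hs z = ⟨z, hz⟩ := dif_neg hz

theorem coe_replaceVertex_eq_or (z : V) :
    (replaceVertex hs z : V) = z ∨ (replaceVertex hs z : V) = s := by
  unfold replaceVertex
  split_ifs <;> simp

theorem replaceVertex_adj (hout : ∀ v, A w₀ v → A s v) (hin : ∀ u, A u w₀ → A u s)
    {u v : V} (huv : A u v) : A (replaceVertex hs u) (replaceVertex hs v) := by
  by_cases hu : u = w₀ <;> by_cases hv : v = w₀
  · subst hu hv
    simpa only [replaceVertex_self] using hin _ (hout _ huv)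
  · subst hu
    simpa only [replaceVertex_self, replaceVertex_of_ne hs hv] using hout _ huv
  · subst hv
    simpa only [replaceVertex_self, replaceVertex_of_ne hs hu] using hin _ huv
  · simpa only [replaceVertex_of_ne hs hu, replaceVertex_of_ne hs hv] using huv

end DeleteVertex

theorem IsKArcStrong.induce_ne {V : Type*} {A : V → V → Prop} {k : ℕ} (hA : IsKArcStrong A k)
    {w₀ : V} {S : Set V} (hw₀ : w₀ ∉ S) (hSind : ∀ a ∈ S, ∀ b ∈ S, ¬ A a b)
    (hout : ∀ s ∈ S, ∀ v, A w₀ v → A s v) (hin : ∀ s ∈ S, ∀ u, A u w₀ → A u s)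
    (hkS : k ≤ S.ncard) :
    IsKArcStrong (fun x y : {z : V // z ≠ w₀} => A x y) k := by
  classical
  intro F hF hFk x y
  set F₀ := {p ∈ F | A p.1 p.2}
  set G : Set (V × V) := Prod.map Subtype.val Subtype.val '' F₀
  have hF₀ : F₀.Finite := hF.subset (Set.sep_subset _ _)
  have hGk : G.ncard < k := calc
    G.ncard ≤ F₀.ncard := Set.ncard_image_le hF₀
    _ ≤ F.ncard := Set.ncard_le_ncard (Set.sep_subset _ _) hF
    _ < k := hFk
  obtain ⟨s, hsS, hsG⟩ := exists_mem_forall_ne_of_ncard_lt hSind (hF₀.image _)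
    (by rintro _ ⟨p, hp, rfl⟩; exact hp.2) (hGk.trans_le hkS)
  have hs : s ≠ w₀ := ne_of_mem_of_not_mem hsS hw₀
  have hstep : ∀ u v, A u v ∧ (u, v) ∉ G →
      A (replaceVertex hs u) (replaceVertex hs v) ∧
        (replaceVertex hs u, replaceVertex hs v) ∉ F := by
    rintro u v ⟨huv, huvG⟩
    have harc := replaceVertex_adj hs (hout s hsS) (hin s hsS) huv
    refine ⟨harc, fun huvF => ?_⟩
    have hG : ((replaceVertex hs u : V), (replaceVertex hs v : V)) ∈ G := ⟨_, ⟨huvF, harc⟩, rfl⟩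
    rcases coe_replaceVertex_eq_or hs u with hu | hu
    · rcases coe_replaceVertex_eq_or hs v with hv | hv
      · exact huvG (hu ▸ hv ▸ hG)
      · exact (hsG _ hG).2 hv
    · exact (hsG _ hG).1 hu
  have hpath : Relation.ReflTransGen (fun a b : {z : V // z ≠ w₀} => A a b ∧ (a, b) ∉ F)
      (replaceVertex hs x) (replaceVertex hs y) :=
    Relation.ReflTransGen.lift _ hstep _ _ (hA G (hF₀.image _) hGk x y)
  rwa [replaceVertex_of_ne hs x.2, replaceVertex_of_ne hs y.2] at hpath

theorem Comp.iff_of_independent_left {ι : Type*} {β : ι → Type*} {D : ι → ι → Prop}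
    {H : ∀ i, β i → β i → Prop} {x y : Σ i, β i} (h : ∀ a b, ¬ H x.1 a b) :
    Comp D H x y ↔ x.1 ≠ y.1 ∧ D x.1 y.1 :=
  or_iff_right fun ⟨_, hH⟩ => h _ _ hH

theorem Comp.iff_of_independent_right {ι : Type*} {β : ι → Type*} {D : ι → ι → Prop}
    {H : ∀ i, β i → β i → Prop} {x y : Σ i, β i} (h : ∀ a b, ¬ H y.1 a b) :
    Comp D H x y ↔ x.1 ≠ y.1 ∧ D x.1 y.1 := by
  refine or_iff_right fun ⟨e, hH⟩ => ?_
  obtain ⟨i, a⟩ := x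
  obtain ⟨j, b⟩ := y
  obtain rfl : j = i := e
  exact h _ _ hH

theorem stmt_2_general {ι : Type*} {β : ι → Type*} [∀ i, Fintype (β i)]
    (D : ι → ι → Prop) (H : ∀ i, β i → β i → Prop) (k : ℕ)
    (i0 : ι) (hind : ∀ a b : β i0, ¬ H i0 a b)
    (hcard : k + 1 ≤ Fintype.card (β i0))
    (w0 : β i0)
    (hQ : IsKArcStrong (Comp D H) k) :
    IsKArcStrong
      (fun x y : {z : Σ i, β i // z ≠ ⟨i0, w0⟩} => Comp D H x.1 y.1) k := by
  have hw0S : (⟨i0, w0⟩ : Σ i, β i) ∉ Sigma.mk i0 '' {w0}ᶜ :=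
    fun ⟨_, hb, hbw⟩ => hb (sigma_mk_injective hbw)
  have hindS : ∀ a ∈ Sigma.mk i0 '' {w0}ᶜ, ∀ b ∈ Sigma.mk i0 '' {w0}ᶜ, ¬ Comp D H a b := by
    rintro _ ⟨a, -, rfl⟩ _ ⟨b, -, rfl⟩ hab
    exact ((Comp.iff_of_independent_left (x := ⟨i0, a⟩) hind).1 hab).1 rfl
  have hkS : k ≤ (Sigma.mk i0 '' ({w0}ᶜ : Set (β i0))).ncard := by
    rw [Set.ncard_image_of_injective _ sigma_mk_injective, Set.ncard_compl, Set.ncard_singleton,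
      Nat.card_eq_fintype_card]
    omega
  refine hQ.induce_ne hw0S hindS ?_ ?_ hkS
  · rintro _ ⟨b, -, rfl⟩ v hv
    exact (Comp.iff_of_independent_left (x := ⟨i0, b⟩) hind).2
      ((Comp.iff_of_independent_left (x := ⟨i0, w0⟩) hind).1 hv)
  · rintro _ ⟨b, -, rfl⟩ u hu
    exact (Comp.iff_of_independent_right (y := ⟨i0, b⟩) hind).2
      ((Comp.iff_of_independent_right (y := ⟨i0, w0⟩) hind).1 hu)

/-- If `Q = D[H₁,…,Hₙ]` is `k`-arc-strong and `H i0` is an independent set with at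
least `k+1` vertices, then deleting one vertex of `H i0` leaves a `k`-arc-strong digraph. -/
theorem stmt_2 {ι : Type*} [Fintype ι] {β : ι → Type*} [∀ i, Fintype (β i)]
    (D : ι → ι → Prop) (H : ∀ i, β i → β i → Prop) (k : ℕ)
    (hn : 2 ≤ Fintype.card ι)
    (i0 : ι) (hind : ∀ a b : β i0, ¬ H i0 a b)
    (hcard : k + 1 ≤ Fintype.card (β i0))
    (w0 : β i0)
    (hQ : IsKArcStrong (Comp D H) k) :
    IsKArcStrong
      (fun x y : {z : Σ i, β i // z ≠ ⟨i0, w0⟩} => Comp D H x.1 y.1) k :=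
  stmt_2_general D H k i0 hind hcard w0 hQ
end

section
/- Let D be a strong digraph of order n ≥ 2 and let H_1,…,H_n be pairwise vertex-disjoint digraphs each having at least k vertices. Then the composition Q = D[H_1,…,H_n] is k-arc-strong. -/
/-!
Let `F` be a set of fewer than `k` arcs and fix a target vertex `t`. Call a vertex bad if it
cannot reach `t` after deleting `F`. Along a walk `i → c → ⋯` of distinct-block steps of `D`
ending in the block of `t`, block `i` has at most as many bad vertices as arcs of `F` leaving
block `i`: block `c` has fewer bad vertices than vertices, so it contains a good vertex `g`, and
every bad vertex of block `i` must have lost its arc to `g`. Since `D` is strong with at least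
two vertices, every block lies on such a walk and has a successor block `i₁ ≠ i`; a source
vertex in block `i` then finds a good vertex of block `i₁` whose arc from it survives, because
the arcs of `F` leaving blocks `i` and `i₁` are disjoint and fewer than `k`.
-/

open Relation

def deleteArcs {V : Type*} (A : V → V → Prop) (F : Set (V × V)) : V → V → Prop :=
  fun x y => A x y ∧ (x, y) ∉ F

lemma reflTransGen_ne_and_of_reflTransGen {α : Type*} {r : α → α → Prop} {a b : α}
    (h : ReflTransGen r a b) : ReflTransGen (fun x y => x ≠ y ∧ r x y) a b := by
  induction h with
  | refl => exact .refl
  | @tail x y _ hxy ih =>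
    by_cases hne : x = y
    · exact hne ▸ ih
    · exact ih.tail ⟨hne, hxy⟩

lemma IsStrong.transGen_ne_and {ι : Type*} [Nontrivial ι] {D : ι → ι → Prop}
    (hD : IsStrong D) (i j : ι) : TransGen (fun x y => x ≠ y ∧ D x y) i j := by
  have of_ne : ∀ i j : ι, i ≠ j → TransGen (fun x y => x ≠ y ∧ D x y) i j := by
    intro i j hij
    rcases (reflTransGen_ne_and_of_reflTransGen (hD i j)).cases_tail with h | ⟨c, hc, hcj⟩
    · exact absurd h.symm hij
    · exact .tail' hc hcj
  by_cases hij : i = j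
  · subst hij
    obtain ⟨m, hm⟩ := exists_ne i
    exact (of_ne i m hm.symm).trans (of_ne m i hm)
  · exact of_ne i j hij

lemma Set.exists_notMem_of_ncard_lt_card {α : Type*} [Fintype α] {s : Set α}
    (hs : s.ncard < Fintype.card α) : ∃ a, a ∉ s := by
  by_contra! h
  rw [Set.eq_univ_of_forall h, Set.ncard_univ, Nat.card_eq_fintype_card] at hs
  exact hs.false

lemma Set.ncard_sep_add_ncard_sep_le {α : Type*} {F : Set α} (hF : F.Finite) {p q : α → Prop}
    (hpq : ∀ x, p x → ¬ q x) : {x ∈ F | p x}.ncard + {x ∈ F | q x}.ncard ≤ F.ncard := by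
  rw [← Set.ncard_union_eq (Set.disjoint_left.mpr fun x hp hq => hpq x hp.2 hq.2)
    (hF.subset fun x hx => hx.1) (hF.subset fun x hx => hx.1)]
  exact Set.ncard_le_ncard (by rintro x (hx | hx) <;> exact hx.1) hF

section Blocks

variable {ι : Type*} {β : ι → Type*} {D : ι → ι → Prop} {A : (Σ i, β i) → (Σ i, β i) → Prop}
  {F : Set ((Σ i, β i) × (Σ i, β i))}

lemma ncard_not_reach_le_of_reach (hA : ∀ {i c}, i ≠ c → D i c → ∀ a b, A ⟨i, a⟩ ⟨c, b⟩)
    (hF : F.Finite) {i c : ι} (hic : i ≠ c) (hD : D i c) {t : Σ i, β i} {g : β c}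
    (hg : ReflTransGen (deleteArcs A F) ⟨c, g⟩ t) :
    {a : β i | ¬ ReflTransGen (deleteArcs A F) ⟨i, a⟩ t}.ncard ≤ {f ∈ F | f.1.1 = i}.ncard := by
  refine Set.ncard_le_ncard_of_injOn (fun a => ((⟨i, a⟩ : Σ i, β i), (⟨c, g⟩ : Σ i, β i)))
    (fun a ha => ⟨?_, rfl⟩) (fun a _ a' _ h => by simpa using h) (hF.subset fun f hf => hf.1)
  by_contra hmem
  exact ha (.head ⟨hA hic hD a g, hmem⟩ hg)

lemma ncard_not_reach_le (hA : ∀ {i c}, i ≠ c → D i c → ∀ a b, A ⟨i, a⟩ ⟨c, b⟩)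
    [∀ i, Fintype (β i)] (hF : F.Finite) (hF_lt : ∀ i, F.ncard < Fintype.card (β i))
    {i j : ι} (hij : TransGen (fun x y => x ≠ y ∧ D x y) i j) (b : β j) :
    {a : β i | ¬ ReflTransGen (deleteArcs A F) ⟨i, a⟩ ⟨j, b⟩}.ncard
      ≤ {f ∈ F | f.1.1 = i}.ncard := by
  induction hij using TransGen.head_induction_on with
  | single h => exact ncard_not_reach_le_of_reach hA hF h.1 h.2 .refl
  | @head i c h _ ih =>
    have hc_lt : {a : β c | ¬ ReflTransGen (deleteArcs A F) ⟨c, a⟩ ⟨j, b⟩}.ncard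
        < Fintype.card (β c) :=
      (ih.trans (Set.ncard_le_ncard (fun f hf => hf.1) hF)).trans_lt (hF_lt c)
    obtain ⟨g, hg⟩ := Set.exists_notMem_of_ncard_lt_card hc_lt
    exact ncard_not_reach_le_of_reach hA hF h.1 h.2 (not_not.mp hg)

end Blocks

/-- If `D` is strong of order `n ≥ 2` and each `H i` has at least `k` vertices, then
the composition `D[H₁,…,Hₙ]` is `k`-arc-strong. -/
theorem stmt_3 {ι : Type*} [Fintype ι] {β : ι → Type*} [∀ i, Fintype (β i)]
    (D : ι → ι → Prop) (H : ∀ i, β i → β i → Prop) (k : ℕ)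
    (hn : 2 ≤ Fintype.card ι) (hD : IsStrong D)
    (hcard : ∀ i, k ≤ Fintype.card (β i)) :
    IsKArcStrong (Comp D H) k := by
  have : Nontrivial ι := Fintype.one_lt_card_iff_nontrivial.mp hn
  intro F hF hFk
  rintro ⟨i, a⟩ ⟨j, b⟩
  have hA : ∀ {i c}, i ≠ c → D i c → ∀ a b, Comp D H ⟨i, a⟩ ⟨c, b⟩ :=
    fun hic hD _ _ => .inr ⟨hic, hD⟩
  have hF_lt : ∀ i, F.ncard < Fintype.card (β i) := fun i => hFk.trans_le (hcard i)
  obtain ⟨i₁, ⟨hii₁, hDii₁⟩, -⟩ := TransGen.head'_iff.mp (hD.transGen_ne_and i i)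
  set notReach := {a₁ : β i₁ | ¬ ReflTransGen (deleteArcs (Comp D H) F) ⟨i₁, a₁⟩ ⟨j, b⟩}
  set deleted := {a₁ : β i₁ | ((⟨i, a⟩ : Σ i, β i), (⟨i₁, a₁⟩ : Σ i, β i)) ∈ F}
  have h_notReach : notReach.ncard ≤ {f ∈ F | f.1.1 = i₁}.ncard :=
    ncard_not_reach_le hA hF hF_lt (hD.transGen_ne_and i₁ j) b
  have h_deleted : deleted.ncard ≤ {f ∈ F | f.1.1 = i}.ncard :=
    Set.ncard_le_ncard_of_injOn (fun a₁ => ((⟨i, a⟩ : Σ i, β i), (⟨i₁, a₁⟩ : Σ i, β i)))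
      (fun _ h => ⟨h, rfl⟩) (fun _ _ _ _ h => by simpa using h) (hF.subset fun f hf => hf.1)
  have h_disjoint := Set.ncard_sep_add_ncard_sep_le hF (p := fun f => f.1.1 = i₁)
    (q := fun f => f.1.1 = i) fun f h₁ h => hii₁ (h ▸ h₁)
  obtain ⟨a₁, ha₁⟩ := Set.exists_notMem_of_ncard_lt_card (s := notReach ∪ deleted)
    ((Set.ncard_union_le _ _).trans_lt (by have := hF_lt i₁; omega))
  rw [Set.mem_union, not_or, Set.mem_ofPred_eq, Set.mem_ofPred_eq, not_not] at ha₁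
  exact .head ⟨hA hii₁ hDii₁ a a₁, ha₁.2⟩ ha₁.1
end

section
/- Let Q be the digraph C_3[H(u), H(v), {z}], where C_3 is the directed 3-cycle on vertices x→y→z→x, H(u) is substituted for x with distinguished vertex u, H(v) is substituted for y with distinguished vertex v, and a single vertex z is substituted for the third vertex. Suppose that every vertex of H(u) other than u has in-degree exactly one in Q, and every vertex of H(v) other than v has out-degree exactly one in Q. Then Q has no good (u,v)-pair. -/
/-- The composition `C₃[H(u), H(v), {z}]`: vertices `Hu ⊕ Hv ⊕ Unit` with internal
arcs `RU`, `RV`, all arcs `Hu → Hv`, `Hv → z` and `z → Hu`. -/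
def Q6 {Hu Hv : Type*} (RU : Hu → Hu → Prop) (RV : Hv → Hv → Prop) :
    (Hu ⊕ Hv ⊕ Unit) → (Hu ⊕ Hv ⊕ Unit) → Prop
  | Sum.inl a, Sum.inl b => RU a b
  | Sum.inl _, Sum.inr (Sum.inl _) => True
  | Sum.inr (Sum.inl a), Sum.inr (Sum.inl b) => RV a b
  | Sum.inr (Sum.inl _), Sum.inr (Sum.inr _) => True
  | Sum.inr (Sum.inr _), Sum.inl _ => True
  | _, _ => False


/-!
Every vertex `a ≠ u` of `H(u)` has `z` as its only in-neighbour, so the out-branching `B₁` contains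
all arcs `z → a`; dually the in-branching `B₂` contains all arcs `b → z` for `b ≠ v`. By
disjointness the out-arc of `z` in `B₂` must be `z → u`, and dually the in-arc of `z` in `B₁` is
`v → z`. The out-arc of `u` in `B₂` can then only be `u → v`: any other choice either enters
`H(u) - u` (impossible) or closes a cycle `u → b → z → u` avoiding the root. Dually `B₁` contains
`u → v` as well, contradicting disjointness.
-/

open Relation

namespace IsInBranching

variable {V : Type*} {A B : V → V → Prop} {v : V}

lemma sub (hB : IsInBranching A B v) {x y : V} (h : B x y) : A x y := hB.1 x y h

lemma exists_out (hB : IsInBranching A B v) {w : V} (hw : w ≠ v) : ∃ y, B w y :=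
  (hB.2.1 w hw).exists

lemma out_unique (hB : IsInBranching A B v) {w y y' : V} (hy : B w y) (hy' : B w y') :
    y = y' :=
  have hw : w ≠ v := by rintro rfl; exact hB.2.2.1 y hy
  (hB.2.1 w hw).unique hy hy'

lemma arc_of_existsUnique (hB : IsInBranching A B v) {w y : V} (hw : w ≠ v)
    (huniq : ∃! y, A w y) (hy : A w y) : B w y := by
  obtain ⟨y', hy'⟩ := hB.exists_out hw
  rwa [huniq.unique (hB.sub hy') hy] at hy'

/-- A vertex on a cycle could reach the root only by leaving the cycle, but out-arcs are unique. -/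
lemma not_transGen_self (hB : IsInBranching A B v) (w : V) : ¬ TransGen B w w := by
  intro hcyc
  suffices ∀ x, ReflTransGen B x v → ¬ TransGen B x w from this w (hB.2.2.2 w) hcyc
  intro x hx
  induction hx using ReflTransGen.head_induction_on with
  | refl =>
    intro h
    obtain ⟨y, hy, -⟩ := TransGen.head'_iff.mp h
    exact hB.2.2.1 y hy
  | head hxx' _ ih =>
    intro h
    obtain ⟨c, hxc, hcw⟩ := TransGen.head'_iff.mp h
    rw [hB.out_unique hxc hxx'] at hcw
    exact ih (TransGen.trans_right hcw hcyc)

end IsInBranching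

namespace IsOutBranching

variable {V : Type*} {A B : V → V → Prop} {u : V}

lemma flip (hB : IsOutBranching A B u) : IsInBranching (flip A) (flip B) u :=
  ⟨fun x y h => hB.1 y x h, hB.2.1, hB.2.2.1, fun w => (hB.2.2.2 w).swap⟩

lemma sub (hB : IsOutBranching A B u) {x y : V} (h : B x y) : A x y := hB.1 x y h

lemma exists_in (hB : IsOutBranching A B u) {w : V} (hw : w ≠ u) : ∃ x, B x w :=
  hB.flip.exists_out hw

lemma arc_of_existsUnique (hB : IsOutBranching A B u) {w x : V} (hw : w ≠ u)
    (huniq : ∃! x, A x w) (hx : A x w) : B x w :=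
  hB.flip.arc_of_existsUnique hw huniq hx

lemma not_transGen_self (hB : IsOutBranching A B u) (w : V) : ¬ TransGen B w w :=
  fun h => hB.flip.not_transGen_self w h.swap

end IsOutBranching

namespace Q6

variable {Hu Hv : Type*} {RU : Hu → Hu → Prop} {RV : Hv → Hv → Prop} {u : Hu} {v : Hv}
  {B₁ B₂ : Hu ⊕ Hv ⊕ Unit → Hu ⊕ Hv ⊕ Unit → Prop}

lemma inBranching_arc_apex_left (h₂ : IsInBranching (Q6 RU RV) B₂ (.inr (.inl v)))
    (hdisj : ArcDisjoint B₁ B₂) (hza : ∀ a, a ≠ u → B₁ (.inr (.inr ())) (.inl a)) :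
    B₂ (.inr (.inr ())) (.inl u) := by
  obtain ⟨y, hy⟩ := h₂.exists_out (w := .inr (.inr ())) (by simp)
  rcases y with a | _ | _
  · obtain rfl | ha := eq_or_ne a u
    · exact hy
    · exact (hdisj _ _ ⟨hza a ha, hy⟩).elim
  all_goals exact (h₂.sub hy).elim

lemma outBranching_arc_right_apex (h₁ : IsOutBranching (Q6 RU RV) B₁ (.inl u))
    (hdisj : ArcDisjoint B₁ B₂) (hbz : ∀ b, b ≠ v → B₂ (.inr (.inl b)) (.inr (.inr ()))) :
    B₁ (.inr (.inl v)) (.inr (.inr ())) := by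
  obtain ⟨x, hx⟩ := h₁.exists_in (w := .inr (.inr ())) (by simp)
  rcases x with _ | b | _
  · exact (h₁.sub hx).elim
  · obtain rfl | hb := eq_or_ne b v
    · exact hx
    · exact (hdisj _ _ ⟨hx, hbz b hb⟩).elim
  · exact (h₁.sub hx).elim

lemma inBranching_arc_left_right (h₂ : IsInBranching (Q6 RU RV) B₂ (.inr (.inl v)))
    (hin : ∀ a : Hu, a ≠ u → ∃! w, Q6 RU RV w (Sum.inl a))
    (hbz : ∀ b, b ≠ v → B₂ (.inr (.inl b)) (.inr (.inr ())))
    (hzu : B₂ (.inr (.inr ())) (.inl u)) :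
    B₂ (.inl u) (.inr (.inl v)) := by
  obtain ⟨y, hy⟩ := h₂.exists_out (w := .inl u) (by simp)
  rcases y with a | b | _
  · obtain rfl | ha := eq_or_ne a u
    · exact (h₂.not_transGen_self _ (.single hy)).elim
    · cases (hin a ha).unique (h₂.sub hy) (show Q6 RU RV (.inr (.inr ())) _ from trivial)
  · obtain rfl | hb := eq_or_ne b v
    · exact hy
    · exact (h₂.not_transGen_self _ (.head hy (.head (hbz b hb) (.single hzu)))).elim
  · exact (h₂.sub hy).elim

lemma outBranching_arc_left_right (h₁ : IsOutBranching (Q6 RU RV) B₁ (.inl u))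
    (hout : ∀ b : Hv, b ≠ v → ∃! w, Q6 RU RV (Sum.inr (Sum.inl b)) w)
    (hza : ∀ a, a ≠ u → B₁ (.inr (.inr ())) (.inl a))
    (hvz : B₁ (.inr (.inl v)) (.inr (.inr ()))) :
    B₁ (.inl u) (.inr (.inl v)) := by
  obtain ⟨x, hx⟩ := h₁.exists_in (w := .inr (.inl v)) (by simp)
  rcases x with a | b | _
  · obtain rfl | ha := eq_or_ne a u
    · exact hx
    · exact (h₁.not_transGen_self _ (.head hx (.head hvz (.single (hza a ha))))).elim
  · obtain rfl | hb := eq_or_ne b v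
    · exact (h₁.not_transGen_self _ (.single hx)).elim
    · cases (hout b hb).unique (h₁.sub hx) (show Q6 RU RV _ (.inr (.inr ())) from trivial)
  · exact (h₁.sub hx).elim

end Q6

theorem stmt_6_general {Hu Hv : Type*}
    (RU : Hu → Hu → Prop) (RV : Hv → Hv → Prop) (u : Hu) (v : Hv)
    (hin : ∀ a : Hu, a ≠ u → ∃! w, Q6 RU RV w (Sum.inl a))
    (hout : ∀ b : Hv, b ≠ v → ∃! w, Q6 RU RV (Sum.inr (Sum.inl b)) w) :
    ¬ GoodPair (Q6 RU RV) (Sum.inl u) (Sum.inr (Sum.inl v)) := by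
  rintro ⟨B₁, B₂, h₁, h₂, hdisj⟩
  have hza : ∀ a, a ≠ u → B₁ (.inr (.inr ())) (.inl a) := fun a ha =>
    h₁.arc_of_existsUnique (by simpa using ha) (hin a ha) trivial
  have hbz : ∀ b, b ≠ v → B₂ (.inr (.inl b)) (.inr (.inr ())) := fun b hb =>
    h₂.arc_of_existsUnique (by simpa using hb) (hout b hb) trivial
  have huv₁ := Q6.outBranching_arc_left_right h₁ hout hza
    (Q6.outBranching_arc_right_apex h₁ hdisj hbz)
  have huv₂ := Q6.inBranching_arc_left_right h₂ hin hbz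
    (Q6.inBranching_arc_apex_left h₂ hdisj hza)
  exact hdisj _ _ ⟨huv₁, huv₂⟩

/-- If in `Q = C₃[H(u), H(v), {z}]` every vertex of `H(u)` other than `u` has
in-degree exactly one and every vertex of `H(v)` other than `v` has out-degree
exactly one, then `Q` has no good `(u,v)`-pair. -/
theorem stmt_6 {Hu Hv : Type*} [Fintype Hu] [Fintype Hv]
    (RU : Hu → Hu → Prop) (RV : Hv → Hv → Prop) (u : Hu) (v : Hv)
    (hin : ∀ a : Hu, a ≠ u → ∃! w, Q6 RU RV w (Sum.inl a))
    (hout : ∀ b : Hv, b ≠ v → ∃! w, Q6 RU RV (Sum.inr (Sum.inl b)) w) :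
    ¬ GoodPair (Q6 RU RV) (Sum.inl u) (Sum.inr (Sum.inl v)) :=
  stmt_6_general RU RV u v hin hout
end

section
/- Let S be a strong semicomplete digraph on s ≥ 2 vertices and let H_1,…,H_s be arbitrary pairwise vertex-disjoint digraphs. Let Q = S[H_1,…,H_s] and let u, v be vertices of Q with either u = v or H(u) ≠ H(v), where H(x) denotes the digraph H_i containing x, and assume that the corresponding vertices u_S, v_S of S satisfy: S has a good (u_S,v_S)-pair. Then Q has a good (u,v)-pair which uses no arc lying inside any H_i. -/
/-!
Fix a representative in every `H i`, taking `u` in the class of `u` and `v` in the class of `v`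
(possible as `u = v` or the classes differ). Each arc `i j` of a branching of `S` is lifted to the
arcs from the representative of `H i` to all of `H j`; the non-root vertices of the root's own
class are attached to the representative of an in-neighbour (for the in-branching: out-neighbour)
of the root, which exists since `S` is strong with at least two vertices. Lifted arcs join
different classes, and two lifted arcs can only coincide if they come from a common arc of `S`.
-/

theorem Relation.ReflTransGen.exists_ne_rel_of_ne {α : Type*} {r : α → α → Prop} {a b : α}
    (h : Relation.ReflTransGen r a b) (hab : a ≠ b) : ∃ c, c ≠ b ∧ r c b := by
  induction h with
  | refl => exact absurd rfl hab
  | @tail c d _ hcd ih =>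
    by_cases hc : c = d
    · subst hc
      exact ih hab
    · exact ⟨c, hc, hcd⟩

theorem IsStrong.flip {V : Type*} {A : V → V → Prop} (h : IsStrong A) : IsStrong (flip A) :=
  fun x y => (h y x).swap

theorem IsStrong.exists_ne_rel {V : Type*} [Nontrivial V] {A : V → V → Prop} (h : IsStrong A)
    (y : V) : ∃ x, x ≠ y ∧ A x y := by
  obtain ⟨x, hx⟩ := exists_ne y
  exact (h x y).exists_ne_rel_of_ne hx

theorem isOutBranching_flip_iff {V : Type*} {A B : V → V → Prop} {r : V} :
    IsOutBranching (flip A) (flip B) r ↔ IsInBranching A B r := by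
  refine ⟨fun h => ⟨fun x y => h.1 y x, h.2.1, h.2.2.1, fun w => ?_⟩,
    fun h => ⟨fun x y => h.1 y x, h.2.1, h.2.2.1, fun w => ?_⟩⟩
  · exact Relation.reflTransGen_swap.1 (h.2.2.2 w)
  · exact Relation.reflTransGen_swap.2 (h.2.2.2 w)

theorem IsOutBranching.irrefl {V : Type*} {A B : V → V → Prop} {r : V}
    (h : IsOutBranching A B r) (x : V) : ¬ B x x := by
  intro hx
  have hxr : x ≠ r := fun he => h.2.2.1 x (he ▸ hx)
  have hpar : ∀ z, B z x → z = x := fun z hz => (h.2.1 x hxr).unique hz hx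
  suffices ∀ a, Relation.ReflTransGen B a x → a = x from hxr (this r (h.2.2.2 x)).symm
  intro a ha
  induction ha using Relation.ReflTransGen.head_induction_on with
  | refl => rfl
  | head hab _ ih => exact hpar _ (ih ▸ hab)

theorem IsInBranching.irrefl {V : Type*} {A B : V → V → Prop} {r : V}
    (h : IsInBranching A B r) (x : V) : ¬ B x x :=
  (isOutBranching_flip_iff.2 h).irrefl x

section Lift

variable {ι : Type*} {β : ι → Type*}

def liftBranching (B : ι → ι → Prop) (R : ∀ i, β i) (r w : ι) :
    (Σ i, β i) → (Σ i, β i) → Prop :=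
  fun x y => (x = ⟨x.1, R x.1⟩ ∧ B x.1 y.1) ∨ (x = ⟨w, R w⟩ ∧ y.1 = r ∧ y ≠ ⟨r, R r⟩)

variable {B B' : ι → ι → Prop} {R : ∀ i, β i} {r r' w w' : ι}

theorem liftBranching_fst_ne (hB : ∀ i, ¬ B i i) (hw : w ≠ r) {x y : Σ i, β i}
    (h : liftBranching B R r w x y) : x.1 ≠ y.1 := by
  rcases h with ⟨-, hxy⟩ | ⟨rfl, hy, -⟩
  · exact fun he => hB _ (he ▸ hxy)
  · exact hy ▸ hw

theorem IsOutBranching.lift {S : ι → ι → Prop} {A : (Σ i, β i) → (Σ i, β i) → Prop}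
    (hA : ∀ x y : Σ i, β i, x.1 ≠ y.1 → S x.1 y.1 → A x y) (hB : IsOutBranching S B r)
    (R : ∀ i, β i) (hw : w ≠ r) (hwr : S w r) :
    IsOutBranching A (liftBranching B R r w) ⟨r, R r⟩ := by
  have hpar : ∀ z : Σ i, β i, z ≠ ⟨r, R r⟩ → ∃! x, liftBranching B R r w x z := by
    intro z hz
    by_cases hzr : z.1 = r
    · refine ⟨⟨w, R w⟩, Or.inr ⟨rfl, hzr, hz⟩, ?_⟩
      rintro x (⟨-, hxz⟩ | ⟨hx, -⟩)
      · exact absurd (hzr ▸ hxz) (hB.2.2.1 x.1)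
      · exact hx
    · obtain ⟨p, hp, hpu⟩ := hB.2.1 z.1 hzr
      refine ⟨⟨p, R p⟩, Or.inl ⟨rfl, hp⟩, ?_⟩
      rintro x (⟨hx, hxz⟩ | ⟨-, hz', -⟩)
      · rw [hx, hpu x.1 hxz]
      · exact absurd hz' hzr
  have hreach : ∀ i, Relation.ReflTransGen B r i →
      Relation.ReflTransGen (liftBranching B R r w) ⟨r, R r⟩ ⟨i, R i⟩ := by
    intro i hi
    induction hi with
    | refl => rfl
    | tail _ hjk ih => exact ih.tail (Or.inl ⟨rfl, hjk⟩)
  refine ⟨fun x y hxy => ?_, hpar, ?_, fun z => ?_⟩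
  · have hne := liftBranching_fst_ne hB.irrefl hw hxy
    rcases hxy with ⟨-, hxy⟩ | ⟨rfl, hy, -⟩
    · exact hA x y hne (hB.1 _ _ hxy)
    · exact hA _ y hne (hy ▸ hwr)
  · rintro x (⟨-, hx⟩ | ⟨-, -, hne⟩)
    · exact hB.2.2.1 x.1 hx
    · exact hne rfl
  · by_cases hz : z = ⟨r, R r⟩
    · rw [hz]
    obtain ⟨x, hxz, -⟩ := hpar z hz
    obtain ⟨i, rfl⟩ : ∃ i, x = ⟨i, R i⟩ := by
      rcases hxz with ⟨hx, -⟩ | ⟨hx, -⟩ <;> exact ⟨_, hx⟩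
    exact (hreach i (hB.2.2.2 i)).tail hxz

theorem IsInBranching.lift {S : ι → ι → Prop} {A : (Σ i, β i) → (Σ i, β i) → Prop}
    (hA : ∀ x y : Σ i, β i, x.1 ≠ y.1 → S x.1 y.1 → A x y) (hB : IsInBranching S B r)
    (R : ∀ i, β i) (hw : w ≠ r) (hrw : S r w) :
    IsInBranching A (flip (liftBranching (flip B) R r w)) ⟨r, R r⟩ :=
  isOutBranching_flip_iff.1 <|
    (isOutBranching_flip_iff.2 hB).lift (fun x y hne h => hA y x hne.symm h) R hw hrw

theorem arcDisjoint_liftBranching (hD : ArcDisjoint B B') :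
    ArcDisjoint (liftBranching B R r w) (flip (liftBranching (flip B') R r' w')) := by
  rintro x y ⟨⟨hx, hxy⟩ | ⟨hx, hyr, hyne⟩, ⟨hy, hyx⟩ | ⟨-, hxr, hxne⟩⟩
  · exact hD x.1 y.1 ⟨hxy, hyx⟩
  · exact hxne (by rw [← hxr, hx])
  · exact hyne (by rw [← hyr, hy])
  · exact hxne (by rw [← hxr, hx])

end Lift

theorem exists_pi_apply_fst_eq_snd {ι : Type*} {β : ι → Type*} [∀ i, Nonempty (β i)]
    {u v : Σ i, β i} (huv : u = v ∨ u.1 ≠ v.1) : ∃ R : ∀ i, β i, R u.1 = u.2 ∧ R v.1 = v.2 := by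
  classical
  refine ⟨Function.update (Function.update (fun _ => Classical.arbitrary _) v.1 v.2) u.1 u.2,
    Function.update_self .., ?_⟩
  rcases huv with rfl | huv
  · exact Function.update_self ..
  · rw [Function.update_of_ne huv.symm, Function.update_self]

theorem stmt_10_general {ι : Type*} [Fintype ι] {β : ι → Type*}
    [∀ i, Nonempty (β i)]
    (S : ι → ι → Prop) (H : ∀ i, β i → β i → Prop)
    (hs : 2 ≤ Fintype.card ι)
    (hstrong : IsStrong S)
    (u v : Σ i, β i) (huv : u = v ∨ u.1 ≠ v.1)
    (hS : GoodPair S u.1 v.1) :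
    ∃ B₁ B₂, IsOutBranching (Comp S H) B₁ u ∧ IsInBranching (Comp S H) B₂ v ∧
      ArcDisjoint B₁ B₂ ∧
      ∀ x y : Σ i, β i, x.1 = y.1 → ¬ B₁ x y ∧ ¬ B₂ x y := by
  obtain ⟨B₁, B₂, hO, hI, hD⟩ := hS
  have : Nontrivial ι := Fintype.one_lt_card_iff_nontrivial.mp hs
  obtain ⟨w, hwu, hw⟩ := hstrong.exists_ne_rel u.1
  obtain ⟨w', hwv, hw'⟩ := hstrong.flip.exists_ne_rel v.1
  obtain ⟨R, hRu, hRv⟩ := exists_pi_apply_fst_eq_snd huv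
  rw [show u = ⟨u.1, R u.1⟩ by rw [hRu], show v = ⟨v.1, R v.1⟩ by rw [hRv]]
  have hinter : ∀ x y : Σ i, β i, x.1 ≠ y.1 → S x.1 y.1 → Comp S H x y :=
    fun x y hne h => by unfold Comp; exact Or.inr ⟨hne, h⟩
  exact ⟨_, _, hO.lift hinter R hwu hw, hI.lift hinter R hwv hw', arcDisjoint_liftBranching hD,
    fun x y hxy => ⟨fun h => liftBranching_fst_ne hO.irrefl hwu h hxy,
      fun h => liftBranching_fst_ne (B := flip B₂) hI.irrefl hwv h hxy.symm⟩⟩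

/-- If `S` is a strong semicomplete digraph with a good `(u_S, v_S)`-pair and
`u = v` or `u, v` lie in different `H i`'s, then `Q = S[H₁,…,H_s]` has a good
`(u,v)`-pair using no arc lying inside any `H i`. -/
theorem stmt_10 {ι : Type*} [Fintype ι] {β : ι → Type*} [∀ i, Fintype (β i)]
    [∀ i, Nonempty (β i)]
    (S : ι → ι → Prop) (H : ∀ i, β i → β i → Prop)
    (hs : 2 ≤ Fintype.card ι)
    (hsemi : ∀ i j, i ≠ j → S i j ∨ S j i)
    (hstrong : IsStrong S)
    (u v : Σ i, β i) (huv : u = v ∨ u.1 ≠ v.1)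
    (hS : GoodPair S u.1 v.1) :
    ∃ B₁ B₂, IsOutBranching (Comp S H) B₁ u ∧ IsInBranching (Comp S H) B₂ v ∧
      ArcDisjoint B₁ B₂ ∧
      ∀ x y : Σ i, β i, x.1 = y.1 → ¬ B₁ x y ∧ ¬ B₂ x y :=
  stmt_10_general S H hs hstrong u v huv hS
end

section
/- Let S be a strong semicomplete digraph and let a, b be vertices (possibly a = b) such that the triple (S,a,b) is of type A: there is a partition V_1,…,V_{2α+1} of V(S) for some α ≥ 1 with b ∈ V_2, a ∈ V_{2α}, all arcs between V_i and V_j with i < j go from V_i to V_j except for precisely one 'backward' arc x_i y_i from V_{2α+2−i} to V_{2α−i} for each i ∈ [2α−1], which goes from the terminal strong component of S⟨V_{2α+2−i}⟩ to the initial strong component of S⟨V_{2α−i}⟩. Then every pair consisting of an out-branching of S rooted at a and an in-branching of S rooted at b must share at least one backward arc; in particular S has no good (a,b)-pair. -/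
/-!
Cut `S` between the levels `≤ k` and `> k` of the partition. The only arcs leaving the upper side
are backward arcs, and the backward arc `x i y i` crosses exactly the cuts `k = 2α - i` and
`k = 2α + 1 - i`. An out-branching rooted at `a ∈ V_{2α}` must cross every cut `k ≤ 2α - 1` to
reach `V_1`, an in-branching rooted at `b ∈ V_2` every cut `k ≥ 2` to be reached from `V_{2α+1}`.
With `n = 2α - 1` backward arcs, the first thus uses arc `n` and one of the arcs `j, j + 1` for
each `j < n`, the second arc `1` and one of `j, j + 1` for each `j < n`. If they shared no arc they
would alternate, the first using `n, n - 2, …` and the second `n - 1, n - 3, …`; as `n` is odd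
the first then uses arc `1`, which the second uses too.
-/

lemma Relation.ReflTransGen.exists_rel_not_and {V : Type*} {r : V → V → Prop} {s : V → Prop}
    {u w : V} (h : Relation.ReflTransGen r u w) (hu : ¬ s u) (hw : s w) :
    ∃ p q, r p q ∧ ¬ s p ∧ s q := by
  induction h with
  | refl => exact absurd hw hu
  | @tail c d _ hcd ih =>
    by_cases hc : s c
    · exact ih hc
    · exact ⟨c, d, hcd, hc, hw⟩

lemma exists_common_of_hits_adjacent_pairs (P Q : ℕ → Prop) {n : ℕ} (hn : Odd n)
    (hPn : P n) (hQ₁ : Q 1) (hP : ∀ j, 1 ≤ j → j < n → P j ∨ P (j + 1))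
    (hQ : ∀ j, 1 ≤ j → j < n → Q j ∨ Q (j + 1)) :
    ∃ i, 1 ≤ i ∧ i ≤ n ∧ P i ∧ Q i := by
  by_contra! hdisj
  have alternate : ∀ t, 2 * t < n → P (n - 2 * t) := by
    intro t
    induction t with
    | zero => intro; simpa using hPn
    | succ t ih =>
      intro ht
      have hP₀ := ih (by omega)
      have hQ_prev : Q (n - 2 * t - 1) := by
        have hpair := hQ (n - 2 * t - 1) (by omega) (by omega)
        rw [show n - 2 * t - 1 + 1 = n - 2 * t by omega] at hpair
        exact hpair.resolve_right fun h => hdisj _ (by omega) (by omega) hP₀ h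
      have hpair := hP (n - 2 * t - 2) (by omega) (by omega)
      rw [show n - 2 * t - 2 + 1 = n - 2 * t - 1 by omega] at hpair
      rw [show n - 2 * (t + 1) = n - 2 * t - 2 by omega]
      exact hpair.resolve_right fun h => hdisj _ (by omega) (by omega) h hQ_prev
  obtain ⟨m, rfl⟩ := hn
  have hP₁ := alternate m (by omega)
  rw [show 2 * m + 1 - 2 * m = 1 by omega] at hP₁
  exact hdisj 1 le_rfl (by omega) hP₁ hQ₁

lemma exists_backward_arc_of_reflTransGen {V : Type*} {A B : V → V → Prop} {f : V → ℕ} {α : ℕ}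
    {x y : ℕ → V}
    (hxy : ∀ i, 1 ≤ i → i ≤ 2 * α - 1 → f (x i) = 2 * α + 2 - i ∧ f (y i) = 2 * α - i)
    (hforward : ∀ p q, A p q → f q < f p → ∃ i, 1 ≤ i ∧ i ≤ 2 * α - 1 ∧ p = x i ∧ q = y i)
    (hBA : ∀ p q, B p q → A p q) {u w : V} (huw : Relation.ReflTransGen B u w) {j : ℕ}
    (hw : f w + j ≤ 2 * α) (hu : 2 * α < f u + j) :
    ∃ i, 1 ≤ i ∧ i ≤ 2 * α - 1 ∧ B (x i) (y i) ∧ (i = j ∨ i = j + 1) := by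
  obtain ⟨p, q, hpq, hp, hq⟩ : ∃ p q, B p q ∧ ¬ f p + j ≤ 2 * α ∧ f q + j ≤ 2 * α :=
    huw.exists_rel_not_and (s := (f · + j ≤ 2 * α)) (by omega) hw
  obtain ⟨i, hi₁, hi₂, rfl, rfl⟩ := hforward p q (hBA p q hpq) (by omega)
  obtain ⟨hfx, hfy⟩ := hxy i hi₁ hi₂
  exact ⟨i, hi₁, hi₂, hpq, by omega⟩

theorem stmt_11_general {V : Type*} (A : V → V → Prop) (a b : V)
    (α : ℕ) (hα : 1 ≤ α)
    (f : V → ℕ)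
    (hfsurj : ∀ j, 1 ≤ j → j ≤ 2 * α + 1 → ∃ w, f w = j)
    (hb : f b = 2) (ha : f a = 2 * α)
    (x y : ℕ → V)
    (hxy : ∀ i, 1 ≤ i → i ≤ 2 * α - 1 →
      f (x i) = 2 * α + 2 - i ∧ f (y i) = 2 * α - i ∧ A (x i) (y i) ∧
      (∀ w, f w = 2 * α + 2 - i →
        Relation.ReflTransGen
          (fun p q => A p q ∧ f p = 2 * α + 2 - i ∧ f q = 2 * α + 2 - i) w (x i)) ∧
      (∀ w, f w = 2 * α - i →
        Relation.ReflTransGen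
          (fun p q => A p q ∧ f p = 2 * α - i ∧ f q = 2 * α - i) (y i) w))
    (hforward : ∀ p q, A p q → f q < f p →
      ∃ i, 1 ≤ i ∧ i ≤ 2 * α - 1 ∧ p = x i ∧ q = y i) :
    (∀ B₁ B₂, IsOutBranching A B₁ a → IsInBranching A B₂ b →
      ∃ i, 1 ≤ i ∧ i ≤ 2 * α - 1 ∧ B₁ (x i) (y i) ∧ B₂ (x i) (y i)) ∧
    ¬ GoodPair A a b := by
  have hlevels : ∀ i, 1 ≤ i → i ≤ 2 * α - 1 → f (x i) = 2 * α + 2 - i ∧ f (y i) = 2 * α - i :=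
    fun i hi₁ hi₂ => ⟨(hxy i hi₁ hi₂).1, (hxy i hi₁ hi₂).2.1⟩
  have shared : ∀ B₁ B₂, IsOutBranching A B₁ a → IsInBranching A B₂ b →
      ∃ i, 1 ≤ i ∧ i ≤ 2 * α - 1 ∧ B₁ (x i) (y i) ∧ B₂ (x i) (y i) := by
    intro B₁ B₂ hB₁ hB₂
    obtain ⟨bottom, hbottom⟩ := hfsurj 1 le_rfl (by omega)
    obtain ⟨top, htop⟩ := hfsurj (2 * α + 1) (by omega) le_rfl
    have cross₁ j (hj₁ : 1 ≤ j) (hj₂ : j < 2 * α) := exists_backward_arc_of_reflTransGen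
      hlevels hforward hB₁.1 (hB₁.2.2.2 bottom) (j := j) (by omega) (by omega)
    have cross₂ j (hj : j + 2 ≤ 2 * α) := exists_backward_arc_of_reflTransGen
      hlevels hforward hB₂.1 (hB₂.2.2.2 top) (j := j) (by omega) (by omega)
    apply exists_common_of_hits_adjacent_pairs (fun i => B₁ (x i) (y i))
      (fun i => B₂ (x i) (y i)) ⟨α - 1, by omega⟩
    · obtain ⟨i, -, hi, hB, rfl | rfl⟩ := cross₁ (2 * α - 1) (by omega) (by omega)
      exacts [hB, by omega]
    · obtain ⟨i, hi, -, hB, rfl | rfl⟩ := cross₂ 0 (by omega)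
      exacts [by omega, hB]
    · intro j hj₁ hj₂
      obtain ⟨i, -, -, hB, rfl | rfl⟩ := cross₁ j hj₁ (by omega)
      exacts [.inl hB, .inr hB]
    · intro j _ hj
      obtain ⟨i, -, -, hB, rfl | rfl⟩ := cross₂ j (by omega)
      exacts [.inl hB, .inr hB]
  refine ⟨shared, fun ⟨B₁, B₂, hB₁, hB₂, hdisj⟩ => ?_⟩
  obtain ⟨i, -, -, hi₁, hi₂⟩ := shared B₁ B₂ hB₁ hB₂
  exact hdisj (x i) (y i) ⟨hi₁, hi₂⟩

/-- If the strong semicomplete digraph `S` (arc relation `A`) is of type A with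
respect to `(a,b)` — witnessed by a `1`-based partition index function
`f : V → ℕ` onto `{1,…,2α+1}`, backward arcs `x i y i` from part `2α+2−i` to part
`2α−i` for `i ∈ [2α−1]` going from the terminal component of the source part to
the initial component of the target part, all other arcs between distinct parts
going forward — then every out-branching rooted at `a` and every in-branching
rooted at `b` share some backward arc; in particular `S` has no good `(a,b)`-pair. -/
theorem stmt_11 {V : Type*} [Fintype V] (A : V → V → Prop) (a b : V)
    (hsemi : ∀ p q : V, p ≠ q → A p q ∨ A q p) (hstrong : IsStrong A)
    (α : ℕ) (hα : 1 ≤ α)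
    (f : V → ℕ) (hf : ∀ w, 1 ≤ f w ∧ f w ≤ 2 * α + 1)
    (hfsurj : ∀ j, 1 ≤ j → j ≤ 2 * α + 1 → ∃ w, f w = j)
    (hb : f b = 2) (ha : f a = 2 * α)
    (x y : ℕ → V)
    (hxy : ∀ i, 1 ≤ i → i ≤ 2 * α - 1 →
      f (x i) = 2 * α + 2 - i ∧ f (y i) = 2 * α - i ∧ A (x i) (y i) ∧
      (∀ w, f w = 2 * α + 2 - i →
        Relation.ReflTransGen
          (fun p q => A p q ∧ f p = 2 * α + 2 - i ∧ f q = 2 * α + 2 - i) w (x i)) ∧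
      (∀ w, f w = 2 * α - i →
        Relation.ReflTransGen
          (fun p q => A p q ∧ f p = 2 * α - i ∧ f q = 2 * α - i) (y i) w))
    (hforward : ∀ p q, A p q → f q < f p →
      ∃ i, 1 ≤ i ∧ i ≤ 2 * α - 1 ∧ p = x i ∧ q = y i) :
    (∀ B₁ B₂, IsOutBranching A B₁ a → IsInBranching A B₂ b →
      ∃ i, 1 ≤ i ∧ i ≤ 2 * α - 1 ∧ B₁ (x i) (y i) ∧ B₂ (x i) (y i)) ∧
    ¬ GoodPair A a b :=
  stmt_11_general A a b α hα f hfsurj hb ha x y hxy hforward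
end

section
/- Let S be a strong semicomplete digraph and let a, b be vertices (possibly a = b) such that (S,a,b) is of type B: there is a partition V_1,…,V_{β+1} of V(S) for some β ≥ 1 with b ∈ V_1, a ∈ V_{β+1}, all arcs between V_i and V_j with i < j go from V_i to V_j except for precisely one 'backward' arc x_i y_i from V_{β+2−i} to V_{β+1−i} for each i ∈ [β]. Then every pair consisting of an out-branching rooted at a and an in-branching rooted at b in S must contain every backward arc x_i y_i in both branchings (hence both branchings share all β backward arcs), so S has no good (a,b)-pair. -/
/-!
For `1 ≤ i ≤ m` the vertices in parts `m + 2 - i, …, m + 1` form a set containing `a` but not `b`,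
and `x i y i` is the only arc of `S` leaving it. Both an out-branching rooted at `a` and an
in-branching rooted at `b` contain a directed `(a, b)`-path, which has to leave this set, so
both contain every backward arc; the two branchings therefore share `x 1 y 1`.
-/

theorem Relation.ReflTransGen.exists_rel_crossing {V : Type*} {R : V → V → Prop} {P : V → Prop}
    {u v : V} (h : Relation.ReflTransGen R u v) (hu : P u) (hv : ¬ P v) :
    ∃ p q, R p q ∧ P p ∧ ¬ P q := by
  induction h with
  | refl => exact absurd hu hv
  | @tail c d _ hcd ih =>
    by_cases hc : P c
    · exact ⟨c, d, hcd, hc, hv⟩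
    · exact ih hc

section TypeB

variable {V : Type*} {A : V → V → Prop} {f : V → ℕ} {m : ℕ} {x y : ℕ → V}

lemma eq_backward_arc_of_crossing
    (hx : ∀ i, 1 ≤ i → i ≤ m → f (x i) = m + 2 - i)
    (hy : ∀ i, 1 ≤ i → i ≤ m → f (y i) = m + 1 - i)
    (hforward : ∀ p q, A p q → f q < f p → ∃ i, 1 ≤ i ∧ i ≤ m ∧ p = x i ∧ q = y i)
    {i : ℕ} {p q : V} (hpq : A p q) (hp : m + 2 - i ≤ f p)
    (hq : f q < m + 2 - i) : p = x i ∧ q = y i := by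
  obtain ⟨j, hj, hjm, rfl, rfl⟩ := hforward p q hpq (by omega)
  have hji : j = i := by
    have := hx j hj hjm
    have := hy j hj hjm
    omega
  exact hji ▸ ⟨rfl, rfl⟩

lemma backward_arc_of_reflTransGen
    (hx : ∀ i, 1 ≤ i → i ≤ m → f (x i) = m + 2 - i)
    (hy : ∀ i, 1 ≤ i → i ≤ m → f (y i) = m + 1 - i)
    (hforward : ∀ p q, A p q → f q < f p → ∃ i, 1 ≤ i ∧ i ≤ m ∧ p = x i ∧ q = y i)
    {a b : V} (ha : f a = m + 1) (hb : f b = 1) {B : V → V → Prop} (hBA : ∀ p q, B p q → A p q)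
    (hab : Relation.ReflTransGen B a b) {i : ℕ} (hi : 1 ≤ i) (him : i ≤ m) : B (x i) (y i) := by
  obtain ⟨p, q, hpq, hp, hq⟩ :=
    hab.exists_rel_crossing (P := fun w => m + 2 - i ≤ f w) (by omega) (by omega)
  obtain ⟨rfl, rfl⟩ :=
    eq_backward_arc_of_crossing hx hy hforward (hBA p q hpq) hp (not_le.mp hq)
  exact hpq

end TypeB

theorem stmt_12_general {V : Type*} (A : V → V → Prop) (a b : V)
    (m : ℕ) (hm : 1 ≤ m)
    (f : V → ℕ)
    (hb : f b = 1) (ha : f a = m + 1)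
    (x y : ℕ → V)
    (hxy : ∀ i, 1 ≤ i → i ≤ m →
      f (x i) = m + 2 - i ∧ f (y i) = m + 1 - i ∧ A (x i) (y i))
    (hforward : ∀ p q, A p q → f q < f p →
      ∃ i, 1 ≤ i ∧ i ≤ m ∧ p = x i ∧ q = y i) :
    (∀ B₁ B₂, IsOutBranching A B₁ a → IsInBranching A B₂ b →
      ∀ i, 1 ≤ i → i ≤ m → B₁ (x i) (y i) ∧ B₂ (x i) (y i)) ∧
    ¬ GoodPair A a b := by
  have hx i hi him := (hxy i hi him).1
  have hy i hi him := (hxy i hi him).2.1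
  have backward_arcs : ∀ B₁ B₂, IsOutBranching A B₁ a → IsInBranching A B₂ b →
      ∀ i, 1 ≤ i → i ≤ m → B₁ (x i) (y i) ∧ B₂ (x i) (y i) :=
    fun B₁ B₂ h₁ h₂ _ hi him =>
      ⟨backward_arc_of_reflTransGen hx hy hforward ha hb h₁.1 (h₁.2.2.2 b) hi him,
        backward_arc_of_reflTransGen hx hy hforward ha hb h₂.1 (h₂.2.2.2 a) hi him⟩
  refine ⟨backward_arcs, ?_⟩
  rintro ⟨B₁, B₂, h₁, h₂, hdisj⟩
  exact hdisj _ _ (backward_arcs B₁ B₂ h₁ h₂ 1 le_rfl hm)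

/-- If the strong semicomplete digraph `S` (arc relation `A`) is of type B with
respect to `(a,b)` — witnessed by a `1`-based partition index function `f` onto
`{1,…,m+1}` with `b` in part `1`, `a` in part `m+1`, and precisely one backward
arc `x i y i` from part `m+2−i` to part `m+1−i` for each `i ∈ [m]`, all other
arcs between distinct parts going forward — then every out-branching rooted at
`a` and every in-branching rooted at `b` contain all the backward arcs; in
particular `S` has no good `(a,b)`-pair. -/
theorem stmt_12 {V : Type*} [Fintype V] (A : V → V → Prop) (a b : V)
    (hsemi : ∀ p q : V, p ≠ q → A p q ∨ A q p) (hstrong : IsStrong A)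
    (m : ℕ) (hm : 1 ≤ m)
    (f : V → ℕ) (hf : ∀ w, 1 ≤ f w ∧ f w ≤ m + 1)
    (hfsurj : ∀ j, 1 ≤ j → j ≤ m + 1 → ∃ w, f w = j)
    (hb : f b = 1) (ha : f a = m + 1)
    (x y : ℕ → V)
    (hxy : ∀ i, 1 ≤ i → i ≤ m →
      f (x i) = m + 2 - i ∧ f (y i) = m + 1 - i ∧ A (x i) (y i))
    (hforward : ∀ p q, A p q → f q < f p →
      ∃ i, 1 ≤ i ∧ i ≤ m ∧ p = x i ∧ q = y i) :
    (∀ B₁ B₂, IsOutBranching A B₁ a → IsInBranching A B₂ b →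
      ∀ i, 1 ≤ i → i ≤ m → B₁ (x i) (y i) ∧ B₂ (x i) (y i)) ∧
    ¬ GoodPair A a b :=
  stmt_12_general A a b m hm f hb ha x y hxy hforward
end

section
/- Let S be a strong semicomplete digraph and let u be a vertex such that S has no good (u,u)-pair. Let X, Y, Z be the partition of V(S)−u where N⁺_S(u) = X ∪ Z, N⁻_S(u) = Y ∪ Z, and Z is the set of vertices forming a 2-cycle with u. Then there is precisely one arc leaving the terminal strong component of S⟨X⟩, precisely one arc entering the initial strong component of S⟨Y⟩, and these two arcs are the same arc e; consequently (S,u,u) is of type A with α = 1 and backward arc e. -/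
/-!
Write `X` (resp. `Y`) for the vertices that `u` dominates (resp. that dominate `u`) without a
2-cycle, `TX` for the terminal strong component of `S⟨X⟩` and `IY` for the initial one of
`S⟨Y⟩`. For an arc `ab` entering `IY`, the star from `u` to all vertices outside `Y`, a BFS
out-branching of `S⟨Y⟩` rooted at `b` and the arc `ab` form an out-branching rooted at `u`.
Dually, an arc `xc` leaving `TX` yields an in-branching rooted at `u` built from the star into
`u`, an in-branching of `S⟨X⟩` rooted at `x` and `xc`. The two branchings can only share the arc
`ab = xc`, so without a good pair every arc entering `IY` equals every arc leaving `TX`. If `Y`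
were empty, the star out of `u` and any in-branching would form a good pair; so `X` and `Y` are
nonempty, and strong connectivity provides such arcs. In the partition `IY`, rest, `TX` the
common arc is then the only backward arc.
-/

open Relation Function

section Branchings

variable {V : Type*}

def induced (A : V → V → Prop) (W : Set V) : V → V → Prop := fun p q => A p q ∧ p ∈ W ∧ q ∈ W

def HasPathOfLength (R : V → V → Prop) : ℕ → V → V → Prop
  | 0, x, y => x = y
  | n + 1, x, z => ∃ y, HasPathOfLength R n x y ∧ R y z

theorem Relation.ReflTransGen.exists_hasPathOfLength {R : V → V → Prop} {x y : V}
    (h : ReflTransGen R x y) : ∃ n, HasPathOfLength R n x y := by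
  induction h with
  | refl => exact ⟨0, rfl⟩
  | tail _ hyz ih =>
    obtain ⟨n, hn⟩ := ih
    exact ⟨n + 1, _, hn, hyz⟩

theorem Relation.ReflTransGen.exists_rel_notMem_mem {R : V → V → Prop} {M : Set V} {s t : V}
    (h : ReflTransGen R s t) (hs : s ∉ M) (ht : t ∈ M) : ∃ p q, R p q ∧ p ∉ M ∧ q ∈ M := by
  induction h with
  | refl => exact absurd ht hs
  | @tail b c _ hbc ih =>
    by_cases hb : b ∈ M
    exacts [ih hb, ⟨b, c, hbc, hb, ht⟩]

def IsOutBranchingOn (A B : V → V → Prop) (W : Set V) (r : V) : Prop :=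
  (∀ x y, B x y → A x y ∧ x ∈ W ∧ y ∈ W) ∧ r ∈ W ∧ (∀ w ∈ W, w ≠ r → ∃! x, B x w) ∧
    (∀ x, ¬ B x r) ∧ ∀ w ∈ W, ReflTransGen B r w

theorem exists_isOutBranchingOn {A : V → V → Prop} {W : Set V} {r : V} (hr : r ∈ W)
    (hW : ∀ w ∈ W, ReflTransGen (induced A W) r w) : ∃ B, IsOutBranchingOn A B W r := by
  classical
  let d : V → ℕ := fun w => sInf {n | HasPathOfLength (induced A W) n r w}
  have hd : ∀ w ∈ W, HasPathOfLength (induced A W) (d w) r w := fun w hw =>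
    Nat.sInf_mem (hW w hw).exists_hasPathOfLength
  have hpred : ∀ w ∈ W, w ≠ r → ∃ p, induced A W p w ∧ d p < d w := by
    intro w hw hwr
    have hpath := hd w hw
    obtain ⟨m, hm⟩ : ∃ m, d w = m + 1 :=
      Nat.exists_eq_succ_of_ne_zero fun h0 => hwr (by rw [h0] at hpath; exact hpath.symm)
    rw [hm] at hpath
    obtain ⟨p, hp, hpw⟩ := hpath
    exact ⟨p, hpw, hm ▸ Nat.lt_succ_of_le (Nat.sInf_le hp)⟩
  choose pred hpred_arc hpred_lt using hpred
  refine ⟨fun x y => ∃ (hy : y ∈ W) (hyr : y ≠ r), x = pred y hy hyr, ?_, hr, ?_, ?_, ?_⟩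
  · rintro x y ⟨hy, hyr, rfl⟩
    exact hpred_arc y hy hyr
  · intro w hw hwr
    exact ⟨pred w hw hwr, ⟨hw, hwr, rfl⟩, fun x ⟨_, _, hx⟩ => hx⟩
  · rintro x ⟨-, hrr, -⟩
    exact hrr rfl
  · intro w
    induction w using (measure d).wf.induction with
    | _ w ih =>
      intro hw
      by_cases hwr : w = r
      · rw [hwr]
      · exact (ih _ (hpred_lt w hw hwr) (hpred_arc w hw hwr).2.1).tail ⟨hw, hwr, rfl⟩

theorem isOutBranchingOn_star {A : V → V → Prop} {W : Set V} {u : V} (hu : u ∈ W)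
    (hW : ∀ w ∈ W, w ≠ u → A u w) :
    IsOutBranchingOn A (fun x y => x = u ∧ y ∈ W ∧ y ≠ u) W u := by
  refine ⟨?_, hu, ?_, ?_, ?_⟩
  · rintro x y ⟨rfl, hy, hyu⟩
    exact ⟨hW y hy hyu, hu, hy⟩
  · intro w hw hwu
    exact ⟨u, ⟨rfl, hw, hwu⟩, fun x hx => hx.1⟩
  · rintro x ⟨-, -, h⟩
    exact h rfl
  · intro w hw
    by_cases hwu : w = u
    · rw [hwu]
    · exact .single ⟨rfl, hw, hwu⟩

theorem IsOutBranchingOn.graft {A B T : V → V → Prop} {W W' : Set V} {r a b : V}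
    (hB : IsOutBranchingOn A B W r) (hT : IsOutBranchingOn A T W' b) (hWW' : Disjoint W W')
    (ha : a ∈ W) (hab : A a b) :
    IsOutBranchingOn A (fun x y => B x y ∨ T x y ∨ (x = a ∧ y = b)) (W ∪ W') r := by
  obtain ⟨hBA, hr, hBu, hBr, hBreach⟩ := hB
  obtain ⟨hTA, hb, hTu, hTb, hTreach⟩ := hT
  have hbW : b ∉ W := hWW'.notMem_of_mem_right hb
  have hTW : ∀ x y, T x y → y ∉ W := fun x y h => hWW'.notMem_of_mem_right (hTA x y h).2.2
  refine ⟨?_, .inl hr, ?_, ?_, ?_⟩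
  · rintro x y (h | h | ⟨rfl, rfl⟩)
    · obtain ⟨h, hx, hy⟩ := hBA x y h
      exact ⟨h, .inl hx, .inl hy⟩
    · obtain ⟨h, hx, hy⟩ := hTA x y h
      exact ⟨h, .inr hx, .inr hy⟩
    · exact ⟨hab, .inl ha, .inr hb⟩
  · rintro w (hw | hw) hwr
    · obtain ⟨x, hx, huniq⟩ := hBu w hw hwr
      refine ⟨x, .inl hx, ?_⟩
      rintro y (h | h | ⟨-, rfl⟩)
      · exact huniq y h
      · exact absurd hw (hTW y w h)
      · exact absurd hw hbW
    · by_cases hwb : w = b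
      · subst hwb
        refine ⟨a, .inr (.inr ⟨rfl, rfl⟩), ?_⟩
        rintro y (h | h | ⟨rfl, -⟩)
        · exact absurd (hBA y w h).2.2 hbW
        · exact absurd h (hTb y)
        · rfl
      · obtain ⟨x, hx, huniq⟩ := hTu w hw hwb
        refine ⟨x, .inr (.inl hx), ?_⟩
        rintro y (h | h | ⟨-, rfl⟩)
        · exact absurd (hBA y w h).2.2 (hWW'.notMem_of_mem_right hw)
        · exact huniq y h
        · exact absurd rfl hwb
  · rintro x (h | h | ⟨-, rfl⟩)
    · exact hBr x h
    · exact hTW x r h hr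
    · exact hbW hr
  · rintro w (hw | hw)
    · exact ReflTransGen.mono (fun _ _ h => .inl h) _ _ (hBreach w hw)
    · exact ((ReflTransGen.mono (fun _ _ h => .inl h) _ _ (hBreach a ha)).tail
        (.inr (.inr ⟨rfl, rfl⟩))).trans
          (ReflTransGen.mono (fun _ _ h => .inr (.inl h)) _ _ (hTreach w hw))

theorem IsOutBranchingOn.isOutBranching {A B : V → V → Prop} {r : V}
    (h : IsOutBranchingOn A B Set.univ r) : IsOutBranching A B r :=
  ⟨fun x y hxy => (h.1 x y hxy).1, fun w => h.2.2.1 w trivial, h.2.2.2.1,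
    fun w => h.2.2.2.2 w trivial⟩

theorem IsOutBranching.swap {A B : V → V → Prop} {r : V} (h : IsOutBranching A B r) :
    IsInBranching (swap A) (swap B) r :=
  ⟨fun x y hxy => h.1 y x hxy, h.2.1, h.2.2.1, fun w => reflTransGen_swap.mpr (h.2.2.2 w)⟩

theorem IsInBranching.swap {A B : V → V → Prop} {r : V} (h : IsInBranching A B r) :
    IsOutBranching (swap A) (swap B) r :=
  ⟨fun x y hxy => h.1 y x hxy, h.2.1, h.2.2.1, fun w => reflTransGen_swap.mpr (h.2.2.2 w)⟩

theorem GoodPair.swap {A : V → V → Prop} {u v : V} (h : GoodPair A u v) :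
    GoodPair (swap A) v u := by
  obtain ⟨B₁, B₂, h₁, h₂, hdisj⟩ := h
  exact ⟨Function.swap B₂, Function.swap B₁, h₂.swap, h₁.swap, fun x y h => hdisj y x ⟨h.2, h.1⟩⟩

theorem IsStrong.swap {A : V → V → Prop} (h : IsStrong A) : IsStrong (swap A) :=
  fun x y => reflTransGen_swap.mpr (h y x)

theorem IsStrong.exists_isOutBranching {A : V → V → Prop} (h : IsStrong A) (r : V) :
    ∃ B, IsOutBranching A B r := by
  obtain ⟨B, hB⟩ := exists_isOutBranchingOn (Set.mem_univ r) fun w _ =>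
    ReflTransGen.mono (fun _ _ hxy => ⟨hxy, trivial, trivial⟩) _ _ (h r w)
  exact ⟨B, hB.isOutBranching⟩

theorem IsStrong.exists_isInBranching {A : V → V → Prop} (h : IsStrong A) (r : V) :
    ∃ B, IsInBranching A B r := by
  obtain ⟨B, hB⟩ := h.swap.exists_isOutBranching r
  exact ⟨Function.swap B, hB.swap⟩

end Branchings

section Semicomplete

variable {V : Type*} {A : V → V → Prop} {W : Set V}

def IsSemicomplete (A : V → V → Prop) : Prop := ∀ p q, p ≠ q → A p q ∨ A q p

theorem IsSemicomplete.swap (h : IsSemicomplete A) : IsSemicomplete (swap A) :=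
  fun p q hpq => (h p q hpq).symm

def terminalPart (A : V → V → Prop) (W : Set V) : Set V :=
  {w | w ∈ W ∧ ∀ z ∈ W, ReflTransGen (induced A W) z w}

def initialPart (A : V → V → Prop) (W : Set V) : Set V :=
  {w | w ∈ W ∧ ∀ z ∈ W, ReflTransGen (induced A W) w z}

theorem induced_swap : induced (swap A) W = swap (induced A W) := by
  funext p q
  exact propext (and_congr_right fun _ => and_comm)

theorem initialPart_swap : initialPart (swap A) W = terminalPart A W := by
  ext w
  simp only [initialPart, terminalPart, induced_swap, reflTransGen_swap]

theorem terminalPart_nonempty (hsemi : IsSemicomplete A) (hW : W.Finite) (hne : W.Nonempty) :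
    (terminalPart A W).Nonempty := by
  -- a vertex reached from a maximal set of vertices of `W` is reached from all of them
  obtain ⟨w, hw, hmax⟩ :=
    hW.exists_maximalFor (fun w => {z | ReflTransGen (induced A W) z w}) W hne
  refine ⟨w, hw, fun z hz => by_contra fun hzw => ?_⟩
  have hwz : A w z := (hsemi w z fun h => hzw (h ▸ .refl)).resolve_right
    fun h => hzw (.single ⟨h, hz, hw⟩)
  exact hzw (hmax hz (fun y hy => hy.tail ⟨hwz, hw, hz⟩) .refl)

theorem initialPart_nonempty (hsemi : IsSemicomplete A) (hW : W.Finite) (hne : W.Nonempty) :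
    (initialPart A W).Nonempty := by
  have := terminalPart_nonempty hsemi.swap hW hne
  rwa [← initialPart_swap] at this

theorem mem_initialPart_of_reflTransGen {y z : V} (hy : y ∈ W)
    (h : ReflTransGen (induced A W) y z) (hz : z ∈ initialPart A W) : y ∈ initialPart A W :=
  ⟨hy, fun w hw => h.trans (hz.2 w hw)⟩

theorem Relation.ReflTransGen.induced_initialPart {y z : V} (h : ReflTransGen (induced A W) y z)
    (hz : z ∈ initialPart A W) : ReflTransGen (induced A (initialPart A W)) y z := by
  induction h using ReflTransGen.head_induction_on with
  | refl => exact .refl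
  | head hyc hcz ih =>
    exact .head ⟨hyc.1, mem_initialPart_of_reflTransGen hyc.2.1 (.head hyc hcz) hz,
      mem_initialPart_of_reflTransGen hyc.2.2 hcz hz⟩ ih

theorem Relation.ReflTransGen.induced_terminalPart {x z : V} (h : ReflTransGen (induced A W) z x)
    (hz : z ∈ terminalPart A W) : ReflTransGen (induced A (terminalPart A W)) z x := by
  rw [← initialPart_swap] at hz ⊢
  rw [← reflTransGen_swap, ← induced_swap] at h ⊢
  exact h.induced_initialPart hz

end Semicomplete

section Neighbourhoods

variable {V : Type*} {A : V → V → Prop} {u : V}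

def strictOutNbrs (A : V → V → Prop) (u : V) : Set V := {w | w ≠ u ∧ A u w ∧ ¬ A w u}

def strictInNbrs (A : V → V → Prop) (u : V) : Set V := {w | w ≠ u ∧ A w u ∧ ¬ A u w}

theorem disjoint_strictOutNbrs_strictInNbrs : Disjoint (strictOutNbrs A u) (strictInNbrs A u) :=
  Set.disjoint_left.2 fun _ hX hY => hX.2.2 hY.2.1

theorem isOutBranchingOn_compl_strictInNbrs (hsemi : IsSemicomplete A) :
    IsOutBranchingOn A (fun x y => x = u ∧ y ∈ (strictInNbrs A u)ᶜ ∧ y ≠ u)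
      (strictInNbrs A u)ᶜ u :=
  isOutBranchingOn_star (fun h => h.1 rfl) fun w hw hwu =>
    (hsemi u w (Ne.symm hwu)).elim id fun hwu' => by_contra fun huw => hw ⟨hwu, hwu', huw⟩

theorem exists_isOutBranching_through_arc (hsemi : IsSemicomplete A) {a b : V} (hab : A a b)
    (ha : a ∉ initialPart A (strictInNbrs A u)) (hb : b ∈ initialPart A (strictInNbrs A u)) :
    ∃ B, IsOutBranching A B u ∧ ∀ x y, B x y →
      x = u ∨ (x ∈ strictInNbrs A u ∧ y ∈ strictInNbrs A u) ∨ (x = a ∧ y = b) := by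
  have haY : a ∉ strictInNbrs A u := fun haY =>
    ha (mem_initialPart_of_reflTransGen haY (.single ⟨hab, haY, hb.1⟩) hb)
  obtain ⟨T, hT⟩ := exists_isOutBranchingOn hb.1 hb.2
  have hB := (isOutBranchingOn_compl_strictInNbrs hsemi).graft hT disjoint_compl_left haY hab
  rw [Set.compl_union_self] at hB
  refine ⟨_, hB.isOutBranching, ?_⟩
  rintro x y (⟨rfl, -⟩ | h | h)
  · exact .inl rfl
  · exact .inr (.inl (hT.1 x y h).2)
  · exact .inr (.inr h)

theorem exists_isInBranching_through_arc (hsemi : IsSemicomplete A) {x c : V} (hxc : A x c)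
    (hx : x ∈ terminalPart A (strictOutNbrs A u)) (hc : c ∉ terminalPart A (strictOutNbrs A u)) :
    ∃ B, IsInBranching A B u ∧ ∀ p q, B p q →
      q = u ∨ (p ∈ strictOutNbrs A u ∧ q ∈ strictOutNbrs A u) ∨ (p = x ∧ q = c) := by
  rw [← initialPart_swap] at hx hc
  obtain ⟨B, hB, hcases⟩ := exists_isOutBranching_through_arc (u := u) hsemi.swap hxc hc hx
  exact ⟨swap B, hB.swap, fun p q h => (hcases q p h).imp_right (Or.imp And.symm And.symm)⟩

theorem eq_of_arc_into_initialPart_of_arc_out_of_terminalPart (hsemi : IsSemicomplete A)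
    (hno : ¬ GoodPair A u u) {a b x c : V}
    (hab : A a b) (ha : a ∉ initialPart A (strictInNbrs A u))
    (hb : b ∈ initialPart A (strictInNbrs A u))
    (hxc : A x c) (hx : x ∈ terminalPart A (strictOutNbrs A u))
    (hc : c ∉ terminalPart A (strictOutNbrs A u)) : x = a ∧ c = b := by
  by_contra hne
  obtain ⟨B₁, hB₁, h₁⟩ := exists_isOutBranching_through_arc hsemi hab ha hb
  obtain ⟨B₂, hB₂, h₂⟩ := exists_isInBranching_through_arc hsemi hxc hx hc
  have hXY := Set.disjoint_left.1 (disjoint_strictOutNbrs_strictInNbrs (A := A) (u := u))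
  refine hno ⟨B₁, B₂, hB₁, hB₂, fun p q ⟨hpq₁, hpq₂⟩ => ?_⟩
  rcases h₁ p q hpq₁ with rfl | ⟨hpY, -⟩ | ⟨rfl, rfl⟩
  · exact hB₂.2.2.1 q hpq₂
  · rcases h₂ p q hpq₂ with rfl | ⟨hpX, -⟩ | ⟨rfl, -⟩
    · exact hB₁.2.2.1 p hpq₁
    · exact hXY hpX hpY
    · exact hXY hx.1 hpY
  · rcases h₂ p q hpq₂ with rfl | ⟨-, hqX⟩ | ⟨rfl, rfl⟩
    · exact hB₁.2.2.1 p hpq₁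
    · exact hXY hqX hb.1
    · exact hne ⟨rfl, rfl⟩

theorem strictInNbrs_nonempty (hsemi : IsSemicomplete A) (hstrong : IsStrong A)
    (hno : ¬ GoodPair A u u) : (strictInNbrs A u).Nonempty := by
  rw [Set.nonempty_iff_ne_empty]
  intro hY
  obtain ⟨B₂, hB₂⟩ := hstrong.exists_isInBranching u
  have hB₁ := isOutBranchingOn_compl_strictInNbrs (u := u) hsemi
  rw [hY, Set.compl_empty] at hB₁
  refine hno ⟨_, B₂, hB₁.isOutBranching, hB₂, ?_⟩
  rintro x y ⟨⟨rfl, -⟩, h₂⟩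
  exact hB₂.2.2.1 y h₂

theorem strictOutNbrs_nonempty (hsemi : IsSemicomplete A) (hstrong : IsStrong A)
    (hno : ¬ GoodPair A u u) : (strictOutNbrs A u).Nonempty :=
  strictInNbrs_nonempty hsemi.swap hstrong.swap fun h => hno h.swap

end Neighbourhoods

theorem exists_typeA_partition {V : Type*} {A : V → V → Prop} {I T : Set V} {u x₀ y₀ : V}
    (hIT : Disjoint I T) (huI : u ∉ I) (huT : u ∉ T) (hx₀ : x₀ ∈ T) (hy₀ : y₀ ∈ I)
    (hleave : ∀ p q, A p q → p ∈ T → q ∉ T → p = x₀ ∧ q = y₀)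
    (henter : ∀ p q, A p q → p ∉ I → q ∈ I → p = x₀ ∧ q = y₀)
    (hT : ∀ z ∈ T, ReflTransGen (induced A T) z x₀)
    (hI : ∀ z ∈ I, ReflTransGen (induced A I) y₀ z) :
    ∃ V₁ V₂ V₃ : Set V,
        V₁ ∪ V₂ ∪ V₃ = Set.univ ∧
        Disjoint V₁ V₂ ∧ Disjoint V₁ V₃ ∧ Disjoint V₂ V₃ ∧
        u ∈ V₂ ∧ x₀ ∈ V₃ ∧ y₀ ∈ V₁ ∧
        (∀ p q, A p q →
          (p ∈ V₁ ∧ q ∈ V₁) ∨ (p ∈ V₂ ∧ q ∈ V₂) ∨ (p ∈ V₃ ∧ q ∈ V₃) ∨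
          (p ∈ V₁ ∧ q ∈ V₂) ∨ (p ∈ V₁ ∧ q ∈ V₃) ∨ (p ∈ V₂ ∧ q ∈ V₃) ∨
          (p = x₀ ∧ q = y₀)) ∧
        (∀ z ∈ V₃, ReflTransGen (fun p q => A p q ∧ p ∈ V₃ ∧ q ∈ V₃) z x₀) ∧
        (∀ z ∈ V₁, ReflTransGen (fun p q => A p q ∧ p ∈ V₁ ∧ q ∈ V₁) y₀ z) := by
  refine ⟨I, (I ∪ T)ᶜ, T, by rw [Set.union_right_comm, Set.union_compl_self],
    Set.disjoint_compl_right_iff_subset.2 Set.subset_union_left, hIT,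
    Set.disjoint_compl_left_iff_subset.2 Set.subset_union_right, fun h => h.elim huI huT,
    hx₀, hy₀, fun p q hpq => ?_, hT, hI⟩
  have := hleave p q hpq
  have := henter p q hpq
  simp only [Set.mem_compl_iff, Set.mem_union]
  tauto

/-- If a strong semicomplete digraph `S` has no good `(u,u)`-pair, then, with
`X` the out-neighbors, `Y` the in-neighbors and `Z` the 2-cycle neighbors of `u`,
there is precisely one arc leaving the terminal strong component of `S⟨X⟩`,
precisely one arc entering the initial strong component of `S⟨Y⟩`, and these
coincide; consequently `(S,u,u)` is of type A with `α = 1` and this backward arc. -/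
theorem stmt_16 {V : Type*} [Fintype V] (A : V → V → Prop) (u : V)
    (hsemi : ∀ p q : V, p ≠ q → A p q ∨ A q p) (hstrong : IsStrong A)
    (hno : ¬ GoodPair A u u) :
    let X : Set V := {w | w ≠ u ∧ A u w ∧ ¬ A w u}
    let Y : Set V := {w | w ≠ u ∧ A w u ∧ ¬ A u w}
    let TX : Set V := {w | w ∈ X ∧ ∀ z ∈ X,
      Relation.ReflTransGen (fun p q => A p q ∧ p ∈ X ∧ q ∈ X) z w}
    let IY : Set V := {w | w ∈ Y ∧ ∀ z ∈ Y,
      Relation.ReflTransGen (fun p q => A p q ∧ p ∈ Y ∧ q ∈ Y) w z}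
    ∃ x0 y0 : V,
      {e : V × V | A e.1 e.2 ∧ e.1 ∈ TX ∧ e.2 ∉ TX} = {(x0, y0)} ∧
      {e : V × V | A e.1 e.2 ∧ e.1 ∉ IY ∧ e.2 ∈ IY} = {(x0, y0)} ∧
      ∃ V₁ V₂ V₃ : Set V,
        V₁ ∪ V₂ ∪ V₃ = Set.univ ∧
        Disjoint V₁ V₂ ∧ Disjoint V₁ V₃ ∧ Disjoint V₂ V₃ ∧
        u ∈ V₂ ∧ x0 ∈ V₃ ∧ y0 ∈ V₁ ∧
        (∀ p q, A p q →
          (p ∈ V₁ ∧ q ∈ V₁) ∨ (p ∈ V₂ ∧ q ∈ V₂) ∨ (p ∈ V₃ ∧ q ∈ V₃) ∨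
          (p ∈ V₁ ∧ q ∈ V₂) ∨ (p ∈ V₁ ∧ q ∈ V₃) ∨ (p ∈ V₂ ∧ q ∈ V₃) ∨
          (p = x0 ∧ q = y0)) ∧
        (∀ z ∈ V₃, Relation.ReflTransGen
          (fun p q => A p q ∧ p ∈ V₃ ∧ q ∈ V₃) z x0) ∧
        (∀ z ∈ V₁, Relation.ReflTransGen
          (fun p q => A p q ∧ p ∈ V₁ ∧ q ∈ V₁) y0 z) := by
  intro X Y TX IY
  have hsemi : IsSemicomplete A := hsemi
  obtain ⟨x, hx⟩ := terminalPart_nonempty hsemi (Set.toFinite X)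
    (strictOutNbrs_nonempty hsemi hstrong hno)
  obtain ⟨y, hy⟩ := initialPart_nonempty hsemi (Set.toFinite Y)
    (strictInNbrs_nonempty hsemi hstrong hno)
  have huTX : u ∉ TX := fun h => h.1.1 rfl
  have huIY : u ∉ IY := fun h => h.1.1 rfl
  obtain ⟨x₀, y₀, hxy₀, hx₀, hy₀⟩ :=
    (hstrong x u).exists_rel_notMem_mem (M := TXᶜ) (Set.notMem_compl_iff.2 hx) huTX
  obtain ⟨a, b, hab, ha, hb⟩ := (hstrong u y).exists_rel_notMem_mem huIY hy
  rw [Set.notMem_compl_iff] at hx₀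
  have key := @eq_of_arc_into_initialPart_of_arc_out_of_terminalPart _ _ _ hsemi hno
  obtain ⟨rfl, rfl⟩ := key hab ha hb hxy₀ hx₀ hy₀
  have hleave : ∀ p q, A p q → p ∈ TX → q ∉ TX → p = x₀ ∧ q = y₀ :=
    fun p q hpq hp hq => key hab ha hb hpq hp hq
  have henter : ∀ p q, A p q → p ∉ IY → q ∈ IY → p = x₀ ∧ q = y₀ :=
    fun p q hpq hp hq => (key hpq hp hq hxy₀ hx₀ hy₀).imp Eq.symm Eq.symm
  refine ⟨x₀, y₀, Set.eq_singleton_iff_unique_mem.2 ⟨⟨hxy₀, hx₀, hy₀⟩,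
      fun e he => Prod.ext_iff.2 (hleave _ _ he.1 he.2.1 he.2.2)⟩,
    Set.eq_singleton_iff_unique_mem.2 ⟨⟨hab, ha, hb⟩,
      fun e he => Prod.ext_iff.2 (henter _ _ he.1 he.2.1 he.2.2)⟩, ?_⟩
  exact exists_typeA_partition (Set.disjoint_left.2 fun w hI hT => hT.1.2.2 hI.1.2.1) huIY huTX
    hx₀ hb hleave henter (fun z hz => (hx₀.2 z hz.1).induced_terminalPart hz)
    fun z hz => (hb.2 z hz.1).induced_initialPart hz
end
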